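/- (GWW fails on the comb tree.) Fix N ≥ 1 and D ≥ 1, and consider the Markov chain (η_j)_{1 ≤ j ≤ D} on {0,1,…,N} defined as follows: η_1 is Binomial(N, 1/2); and given η_j = m, sample S ~ Binomial(N - m, 1/2), then K ~ Binomial(N - m - S, m/(m+S)) if m + S > 0 and K = 0 if m + S = 0, and set η_{j+1} = m + K. Then there exist absolute constants C > 0 and c > 0 (independent of N and D) such that Pr[η_D < N] ≤ C·(N·e^{-cD} + e^{-cN}). Consequently the probability that Go-with-the-Winners (Algorithm 1) reaches the bottom-right vertex of the depth-D comb tree with N walkers is at most C·(N·e^{-cD} + e^{-cN}). -/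

import Mathlib

/-- The binomial probability mass function: `Pr[Bin(n,p) = k]` (zero for `k > n`). -/
noncomputable def binomPMF (n : ℕ) (p : ℝ) (k : ℕ) : ℝ :=
  (n.choose k : ℝ) * p ^ k * (1 - p) ^ (n - k)

/-- Transition probability `Pr[η_{j+1} = m' | η_j = m]` of the comb-tree chain on
`{0,…,N}`: given `η_j = m`, sample `S ~ Bin(N-m, 1/2)`, then `K ~ Bin(N-m-S, m/(m+S))`
when `m + S > 0` (and `K = 0` when `m + S = 0`), and set `η_{j+1} = m + K`. -/
noncomputable def combTrans (N m m' : ℕ) : ℝ :=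
  if m ≤ m' then
    ∑ S ∈ Finset.range (N - m + 1),
      binomPMF (N - m) (1 / 2) S *
        (if 0 < m + S then binomPMF (N - m - S) ((m : ℝ) / ((m : ℝ) + (S : ℝ))) (m' - m)
         else if m' = m then 1 else 0)
  else 0

/-- `combDist N j m = Pr[η_{j+1} = m]` for the comb-tree chain with `N` walkers:
`η_1 ~ Bin(N, 1/2)` and subsequent steps follow `combTrans`. -/
noncomputable def combDist (N : ℕ) : ℕ → ℕ → ℝ
  | 0, m => binomPMF N (1 / 2) m
  | j + 1, m' => ∑ m ∈ Finset.range (N + 1), combDist N j m * combTrans N m m'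

/-!
The number η of walkers on the left tooth is a Markov chain in which `0` is absorbing and is
entered only at the first step, with probability `2⁻ᴺ`. Elsewhere `V m = 1/m - 1/N` is a
Lyapunov function. Given `η = m` and `S`, the increment `K` is `Bin(N - m - S, m/(m + S))`, so
`c := E[m + K] = mN/(m + S)`, and the second-order bound
`1/y ≤ 1/c - (y - c)/c² + (y - c)²/(c² m)` for `y ≥ m` turns `E[1/(m + K)]` into a mean and a
variance: `E[V(m + K)] ≤ S/(mN) + S(N - m - S)/(mN)²`. Averaging over `S ~ Bin(N - m, 1/2)` gives
`E[V(η')] ≤ (3/4) V(η)`. As `V ≥ 1/N²` on `1 ≤ m < N`, Markov's inequality bounds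
`Pr[1 ≤ η_D < N]` by `N² (3/4)^(D-1)`, and `min(1, N² (3/4)^(D-1)) = O(N e^(-D/8))`.
-/

open Finset

lemma binomPMF_eq_eval_bernsteinPolynomial (n : ℕ) (p : ℝ) (k : ℕ) :
    binomPMF n p k = (bernsteinPolynomial ℝ n k).eval p := by
  simp [binomPMF, bernsteinPolynomial]

lemma binomPMF_nonneg {p : ℝ} (hp₀ : 0 ≤ p) (hp₁ : p ≤ 1) (n k : ℕ) : 0 ≤ binomPMF n p k := by
  have : 0 ≤ 1 - p := sub_nonneg.2 hp₁
  unfold binomPMF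
  positivity

lemma binomPMF_zero_prob (n k : ℕ) : binomPMF n 0 k = if k = 0 then 1 else 0 := by
  unfold binomPMF
  split_ifs with hk <;> simp [hk]

lemma binomPMF_eq_zero_of_lt {n k : ℕ} (h : n < k) (p : ℝ) : binomPMF n p k = 0 := by
  simp [binomPMF, Nat.choose_eq_zero_of_lt h]

noncomputable def binomExp (n : ℕ) (p : ℝ) (f : ℕ → ℝ) : ℝ :=
  ∑ k ∈ range (n + 1), binomPMF n p k * f k

lemma sum_range_binomPMF_mul_of_le {n M : ℕ} (h : n ≤ M) (p : ℝ) (f : ℕ → ℝ) :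
    ∑ k ∈ range (M + 1), binomPMF n p k * f k = binomExp n p f := by
  refine (sum_subset (range_subset_range.2 (by omega)) fun k _ hk => ?_).symm
  rw [binomPMF_eq_zero_of_lt (by simp at hk; omega), zero_mul]

lemma binomExp_centered_quadratic (n : ℕ) (p a b d : ℝ) :
    binomExp n p (fun k => a + b * (k - n * p) + d * (k - n * p) ^ 2)
      = a + d * (n * p * (1 - p)) := by
  have h₀ := congrArg (Polynomial.eval p) (bernsteinPolynomial.sum ℝ n)
  have h₁ := congrArg (Polynomial.eval p) (bernsteinPolynomial.sum_smul ℝ n)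
  have h₂ := congrArg (Polynomial.eval p) (bernsteinPolynomial.variance ℝ n)
  simp only [Polynomial.eval_finsetSum, Polynomial.eval_mul,
    Polynomial.eval_pow, Polynomial.eval_sub, Polynomial.eval_natCast, Polynomial.eval_one,
    Polynomial.eval_X, nsmul_eq_mul, ← binomPMF_eq_eval_bernsteinPolynomial] at h₀ h₁ h₂
  calc binomExp n p (fun k => a + b * (k - n * p) + d * (k - n * p) ^ 2)
      = a * ∑ k ∈ range (n + 1), binomPMF n p k
          + b * (∑ k ∈ range (n + 1), k * binomPMF n p k
            - n * p * ∑ k ∈ range (n + 1), binomPMF n p k)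
          + d * ∑ k ∈ range (n + 1), (n * p - k) ^ 2 * binomPMF n p k := by
        simp only [binomExp, mul_sum, ← sum_sub_distrib, ← sum_add_distrib]
        exact sum_congr rfl fun k _ => by ring
    _ = a + d * (n * p * (1 - p)) := by rw [h₀, h₁, h₂]; ring

lemma binomExp_quadratic (n : ℕ) (p a b d : ℝ) :
    binomExp n p (fun k => a + b * k + d * k ^ 2)
      = a + b * (n * p) + d * (n * p * (1 - p) + (n * p) ^ 2) := by
  convert binomExp_centered_quadratic n p (a + b * (n * p) + d * (n * p) ^ 2)
    (b + 2 * d * (n * p)) d using 1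
  · congr 1; funext k; ring
  · ring

lemma binomExp_const (n : ℕ) (p a : ℝ) : binomExp n p (fun _ => a) = a := by
  simpa using binomExp_centered_quadratic n p a 0 0

lemma binomExp_sub (n : ℕ) (p : ℝ) (f g : ℕ → ℝ) :
    binomExp n p (fun k => f k - g k) = binomExp n p f - binomExp n p g := by
  simp only [binomExp, mul_sub, sum_sub_distrib]

lemma binomExp_mono {p : ℝ} (hp₀ : 0 ≤ p) (hp₁ : p ≤ 1) {n : ℕ} {f g : ℕ → ℝ}
    (h : ∀ k ≤ n, f k ≤ g k) : binomExp n p f ≤ binomExp n p g :=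
  sum_le_sum fun k hk =>
    mul_le_mul_of_nonneg_left (h k (by simp at hk; omega)) (binomPMF_nonneg hp₀ hp₁ n k)

lemma binomExp_zero_prob (n : ℕ) (f : ℕ → ℝ) : binomExp n 0 f = f 0 := by
  simp [binomExp, binomPMF_zero_prob]

lemma one_div_le_second_order {x y c : ℝ} (hx : 0 < x) (hxy : x ≤ y) (hc : 0 < c) :
    1 / y ≤ 1 / c - (y - c) / c ^ 2 + (y - c) ^ 2 / (c ^ 2 * x) := by
  have hy : 0 < y := hx.trans_le hxy
  have taylor : 1 / c - (y - c) / c ^ 2 + (y - c) ^ 2 / (c ^ 2 * y) = 1 / y := by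
    field_simp; ring
  rw [← taylor]
  gcongr

lemma binomExp_one_div_add_le {x p : ℝ} (hx : 0 < x) (hp₀ : 0 ≤ p) (hp₁ : p ≤ 1) (n : ℕ) :
    binomExp n p (fun k => 1 / (x + k))
      ≤ 1 / (x + n * p) + n * p * (1 - p) / ((x + n * p) ^ 2 * x) := by
  set c := x + n * p
  have hc : 0 < c := by positivity
  calc binomExp n p (fun k => 1 / (x + k))
      ≤ binomExp n p (fun k => 1 / c + (-1 / c ^ 2) * (k - n * p)
          + 1 / (c ^ 2 * x) * (k - n * p) ^ 2) := by
        refine binomExp_mono hp₀ hp₁ fun k _ => ?_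
        have hk : x + k - c = k - n * p := by ring
        have := one_div_le_second_order hx (le_add_of_nonneg_right k.cast_nonneg) hc
        rw [hk] at this
        convert this using 1
        ring
    _ = 1 / c + n * p * (1 - p) / (c ^ 2 * x) := by
        rw [binomExp_centered_quadratic]; ring

section MarkovChain

variable {n : ℕ} {μ P : ℕ → ℕ → ℝ}

lemma nonneg_of_succ_eq_sum_mul (hμ : ∀ j m', μ (j + 1) m' = ∑ m ∈ range n, μ j m * P m m')
    (h₀ : ∀ m, 0 ≤ μ 0 m) (hP : ∀ m m', 0 ≤ P m m') (j m : ℕ) : 0 ≤ μ j m := by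
  induction j generalizing m with
  | zero => exact h₀ m
  | succ j ih => rw [hμ]; exact sum_nonneg fun i _ => mul_nonneg (ih i) (hP i m)

lemma sum_mul_le_pow_mul_of_drift (hμ : ∀ j m', μ (j + 1) m' = ∑ m ∈ range n, μ j m * P m m')
    (hμ₀ : ∀ j m, 0 ≤ μ j m) {V : ℕ → ℝ} {ρ : ℝ} (hρ : 0 ≤ ρ)
    (hV : ∀ m < n, ∑ m' ∈ range n, P m m' * V m' ≤ ρ * V m) (j : ℕ) :
    ∑ m ∈ range n, μ j m * V m ≤ ρ ^ j * ∑ m ∈ range n, μ 0 m * V m := by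
  induction j with
  | zero => simp
  | succ j ih =>
    calc ∑ m' ∈ range n, μ (j + 1) m' * V m'
        = ∑ m ∈ range n, μ j m * ∑ m' ∈ range n, P m m' * V m' := by
          simp only [hμ, sum_mul, mul_sum, mul_assoc]
          exact sum_comm
      _ ≤ ∑ m ∈ range n, μ j m * (ρ * V m) :=
          sum_le_sum fun m hm => mul_le_mul_of_nonneg_left (hV m (mem_range.1 hm)) (hμ₀ j m)
      _ = ρ * ∑ m ∈ range n, μ j m * V m := by
          rw [mul_sum]; exact sum_congr rfl fun m _ => by ring
      _ ≤ ρ ^ (j + 1) * ∑ m ∈ range n, μ 0 m * V m := by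
          rw [pow_succ', mul_assoc]; exact mul_le_mul_of_nonneg_left ih hρ

end MarkovChain

-- For `m = S = 0` the special branch of `combTrans` agrees with `Bin(N, 0)` because `0 / 0 = 0`.
lemma combTrans_eq (N m m' : ℕ) :
    combTrans N m m' = if m ≤ m' then ∑ S ∈ range (N - m + 1),
      binomPMF (N - m) (1 / 2) S * binomPMF (N - m - S) ((m : ℝ) / (m + S)) (m' - m) else 0 := by
  unfold combTrans
  refine if_congr Iff.rfl (sum_congr rfl fun S _ => ?_) rfl
  rcases Nat.eq_zero_or_pos (m + S) with hmS | hmS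
  · obtain ⟨rfl, rfl⟩ : m = 0 ∧ S = 0 := by omega
    simp [binomPMF_zero_prob]
  · rw [if_pos hmS]

lemma combTrans_nonneg (N m m' : ℕ) : 0 ≤ combTrans N m m' := by
  have hp₀ (S : ℕ) : (0 : ℝ) ≤ m / (m + S) := by positivity
  have hp₁ (S : ℕ) : (m : ℝ) / (m + S) ≤ 1 := div_le_one_of_le₀ (by simp) (by positivity)
  rw [combTrans_eq]
  split_ifs
  · exact sum_nonneg fun S _ => mul_nonneg (binomPMF_nonneg (by norm_num) (by norm_num) _ _)
      (binomPMF_nonneg (hp₀ S) (hp₁ S) _ _)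
  · rfl

lemma sum_combTrans_mul {N m : ℕ} (hm : m ≤ N) (f : ℕ → ℝ) :
    ∑ m' ∈ range (N + 1), combTrans N m m' * f m'
      = binomExp (N - m) (1 / 2) fun S => binomExp (N - m - S) ((m : ℝ) / (m + S)) fun K =>
          f (m + K) := by
  rw [show N + 1 = m + (N - m + 1) by omega, sum_range_add]
  have below : ∑ m' ∈ range m, combTrans N m m' * f m' = 0 :=
    sum_eq_zero fun m' hm' => by
      rw [combTrans_eq, if_neg (by simp at hm'; omega), zero_mul]
  rw [below, zero_add]
  simp only [combTrans_eq, Nat.le_add_right, ite_true, Nat.add_sub_cancel_left, sum_mul]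
  rw [sum_comm]
  refine sum_congr rfl fun S _ => ?_
  dsimp only
  rw [← sum_range_binomPMF_mul_of_le (by omega : N - m - S ≤ N - m), mul_sum]
  exact sum_congr rfl fun K _ => by ring

lemma sum_combTrans_zero_mul (N : ℕ) (f : ℕ → ℝ) :
    ∑ m' ∈ range (N + 1), combTrans N 0 m' * f m' = f 0 := by
  simp [sum_combTrans_mul (Nat.zero_le N), binomExp_zero_prob, binomExp_const]

lemma combDist_nonneg (N j m : ℕ) : 0 ≤ combDist N j m :=
  nonneg_of_succ_eq_sum_mul (fun _ _ => rfl) (binomPMF_nonneg (by norm_num) (by norm_num) N)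
    (combTrans_nonneg N) j m

lemma sum_combDist_zero_mul (N : ℕ) (f : ℕ → ℝ) :
    ∑ m ∈ range (N + 1), combDist N 0 m * f m = binomExp N (1 / 2) f := rfl

lemma sum_combDist_le_one (N j : ℕ) : ∑ m ∈ range (N + 1), combDist N j m ≤ 1 := by
  have drift (m : ℕ) (hm : m < N + 1) :
      ∑ m' ∈ range (N + 1), combTrans N m m' * 1 ≤ 1 * 1 := by
    rw [sum_combTrans_mul (by omega)]
    simp only [binomExp_const, mul_one, le_refl]
  have h := sum_mul_le_pow_mul_of_drift (fun _ _ => rfl) (combDist_nonneg N) zero_le_one drift j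
  rw [sum_combDist_zero_mul, binomExp_const] at h
  simpa using h

lemma combDist_zero_le (N j : ℕ) : combDist N j 0 ≤ (1 / 2) ^ N := by
  have drift (m : ℕ) (hm : m < N + 1) :
      ∑ m' ∈ range (N + 1), combTrans N m m' * (if m' = 0 then 1 else 0)
        ≤ 1 * (if m = 0 then 1 else 0) := by
    rcases Nat.eq_zero_or_pos m with rfl | hm₀
    · rw [sum_combTrans_zero_mul, one_mul]
    · rw [sum_combTrans_mul (by omega)]
      simp [hm₀.ne', binomExp_const]
  have h := sum_mul_le_pow_mul_of_drift (fun _ _ => rfl) (combDist_nonneg N) zero_le_one drift j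
  simp only [mul_ite, mul_one, mul_zero, sum_ite_eq', mem_range, Nat.zero_lt_succ, ite_true,
    one_pow, one_mul] at h
  exact h.trans_eq (by norm_num [combDist, binomPMF])

noncomputable def combLyap (N m : ℕ) : ℝ := if m = 0 then 0 else 1 / m - 1 / N

lemma combLyap_nonneg {N m : ℕ} (hm : m ≤ N) : 0 ≤ combLyap N m := by
  unfold combLyap
  split_ifs with hm₀
  · rfl
  · have : (0 : ℝ) < m := by exact_mod_cast Nat.pos_of_ne_zero hm₀
    exact sub_nonneg.2 (one_div_le_one_div_of_le this (by exact_mod_cast hm))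

lemma combLyap_le_one (N m : ℕ) : combLyap N m ≤ 1 := by
  unfold combLyap
  split_ifs with hm
  · exact zero_le_one
  · have : (1 : ℝ) ≤ m := by exact_mod_cast Nat.one_le_iff_ne_zero.2 hm
    have : 1 / (m : ℝ) ≤ 1 := (div_le_one₀ (by linarith)).2 this
    have : (0 : ℝ) ≤ 1 / N := by positivity
    linarith

lemma binomExp_combLyap_le {N m S : ℕ} (hm : 1 ≤ m) (hmS : m + S ≤ N) :
    binomExp (N - m - S) ((m : ℝ) / (m + S)) (fun K => combLyap N (m + K))
      ≤ S / (m * N) + S * (N - m - S) / (m ^ 2 * N ^ 2) := by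
  have hm₀ : (0 : ℝ) < m := by exact_mod_cast hm
  have hN : (0 : ℝ) < N := by exact_mod_cast (by omega : 0 < N)
  have hmS₀ : (0 : ℝ) < m + S := by positivity
  have hp₀ : (0 : ℝ) ≤ m / (m + S) := by positivity
  have hp₁ : (m : ℝ) / (m + S) ≤ 1 := div_le_one_of_le₀ (by simp) hmS₀.le
  have hcast : ((N - m - S : ℕ) : ℝ) = N - m - S := by
    rw [Nat.sub_sub, Nat.cast_sub hmS]; push_cast; ring
  have hlyap : (fun K => combLyap N (m + K)) = fun K : ℕ => 1 / ((m : ℝ) + K) - 1 / N := by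
    funext K
    rw [combLyap, if_neg (by omega)]
    push_cast
    rfl
  rw [hlyap, binomExp_sub, binomExp_const]
  refine (sub_le_sub_right (binomExp_one_div_add_le hm₀ hp₀ hp₁ _) _).trans_eq ?_
  have hmean : (m : ℝ) + (N - m - S) * (m / (m + S)) = m * N / (m + S) := by
    field_simp; ring
  rw [hcast, hmean]
  field_simp
  ring

lemma sum_combTrans_mul_combLyap_le {N m : ℕ} (hm : m ≤ N) :
    ∑ m' ∈ range (N + 1), combTrans N m m' * combLyap N m' ≤ 3 / 4 * combLyap N m := by
  rcases Nat.eq_zero_or_pos m with rfl | hm₁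
  · rw [sum_combTrans_zero_mul]; simp [combLyap]
  have hm₀ : (0 : ℝ) < m := by exact_mod_cast hm₁
  have hmN : (m : ℝ) ≤ N := by exact_mod_cast hm
  set a : ℝ := 1 / (m * N) + (N - m) / (m ^ 2 * N ^ 2)
  set d : ℝ := -1 / (m ^ 2 * N ^ 2)
  rw [sum_combTrans_mul hm]
  calc binomExp (N - m) (1 / 2) (fun S => binomExp (N - m - S) ((m : ℝ) / (m + S))
          fun K => combLyap N (m + K))
      ≤ binomExp (N - m) (1 / 2) (fun S => 0 + a * S + d * S ^ 2) :=
        binomExp_mono (by norm_num) (by norm_num) fun S hS =>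
          (binomExp_combLyap_le hm₁ (by omega)).trans_eq (by ring)
    _ = a * ((N - m) / 2) + d * ((N - m) / 4 + ((N - m) / 2) ^ 2) := by
        rw [binomExp_quadratic, Nat.cast_sub hm]; ring
    _ ≤ 3 / 4 * combLyap N m := by
        have hm₁' : (1 : ℝ) ≤ m := by exact_mod_cast hm₁
        have hN : (0 : ℝ) < N := hm₀.trans_le hmN
        have gap : 3 / 4 * (1 / m - 1 / N)
              - (a * ((N - m) / 2) + d * ((N - m) / 4 + ((N - m) / 2) ^ 2))
            = (N - m) * (m * N - (N - m) + 1) / (4 * m ^ 2 * N ^ 2) := by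
          simp only [a, d]; field_simp; ring
        have : (0 : ℝ) ≤ (N - m) * (m * N - (N - m) + 1) / (4 * m ^ 2 * N ^ 2) :=
          div_nonneg (by nlinarith) (by positivity)
        rw [combLyap, if_neg hm₁.ne']
        linarith

lemma one_le_sq_mul_combLyap {N m : ℕ} (hm : m ∈ Ico 1 N) : 1 ≤ (N : ℝ) ^ 2 * combLyap N m := by
  obtain ⟨hm₁, hmN⟩ := mem_Ico.1 hm
  have hm₀ : (0 : ℝ) < m := by exact_mod_cast hm₁
  have hmN' : (m : ℝ) + 1 ≤ N := by exact_mod_cast hmN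
  have hN : (0 : ℝ) < N := by linarith
  rw [combLyap, if_neg (by omega), show (N : ℝ) ^ 2 * (1 / m - 1 / N) = N * (N - m) / m by
    field_simp, le_div_iff₀ hm₀]
  nlinarith

lemma sum_Ico_combDist_le (N j : ℕ) :
    ∑ m ∈ Ico 1 N, combDist N j m ≤ (N : ℝ) ^ 2 * (3 / 4) ^ j := by
  have decay := sum_mul_le_pow_mul_of_drift (fun _ _ => rfl) (combDist_nonneg N) (ρ := 3 / 4)
    (by norm_num) (fun m hm => sum_combTrans_mul_combLyap_le (by omega)) j
  have init : ∑ m ∈ range (N + 1), combDist N 0 m * combLyap N m ≤ 1 :=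
    (binomExp_mono (by norm_num) (by norm_num) fun m _ => combLyap_le_one N m).trans_eq
      (binomExp_const N (1 / 2) 1)
  calc ∑ m ∈ Ico 1 N, combDist N j m
      ≤ ∑ m ∈ Ico 1 N, (N : ℝ) ^ 2 * (combDist N j m * combLyap N m) :=
        sum_le_sum fun m hm => by
          nlinarith [one_le_sq_mul_combLyap hm, combDist_nonneg N j m]
    _ ≤ (N : ℝ) ^ 2 * ∑ m ∈ range (N + 1), combDist N j m * combLyap N m := by
        rw [← mul_sum]
        gcongr
        · exact fun m hm _ => mul_nonneg (combDist_nonneg N j m)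
            (combLyap_nonneg (Nat.lt_succ_iff.1 (mem_range.1 hm)))
        · exact fun m hm => by simp at hm ⊢; omega
    _ ≤ (N : ℝ) ^ 2 * (3 / 4) ^ j := by
        gcongr
        exact decay.trans (mul_le_of_le_one_right (by positivity) init)

lemma sum_range_combDist_le {N : ℕ} (hN : 0 < N) (j : ℕ) :
    ∑ m ∈ range N, combDist N j m ≤ (1 / 2) ^ N + (N : ℝ) ^ 2 * (3 / 4) ^ j := by
  rw [sum_range_eq_add_Ico _ hN]
  exact add_le_add (combDist_zero_le N j) (sum_Ico_combDist_le N j)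

lemma sum_range_combDist_le_one (N j : ℕ) : ∑ m ∈ range N, combDist N j m ≤ 1 :=
  (sum_le_sum_of_subset_of_nonneg (range_subset_range.2 N.le_succ)
    fun m _ _ => combDist_nonneg N j m).trans (sum_combDist_le_one N j)

lemma pow_le_exp_neg_mul {a c : ℝ} (ha : 0 ≤ a) (hac : a ≤ Real.exp (-c)) (n : ℕ) :
    a ^ n ≤ Real.exp (-c * n) :=
  calc a ^ n ≤ Real.exp (-c) ^ n := pow_le_pow_left₀ ha hac n
    _ = Real.exp (-c * n) := by rw [← Real.exp_nat_mul]; ring_nf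

lemma sq_mul_pow_le_sq_exp (N : ℕ) {D : ℕ} (hD : 1 ≤ D) :
    (N : ℝ) ^ 2 * (3 / 4) ^ (D - 1) ≤ 4 / 3 * (N * Real.exp (-(1 / 8) * D)) ^ 2 := by
  have h := pow_le_exp_neg_mul (c := 1 / 4) (by norm_num)
    (by linarith [Real.add_one_le_exp (-(1 / 4))] : (3 / 4 : ℝ) ≤ _) D
  rw [show -(1 / 4) * (D : ℝ) = -(1 / 8) * D + -(1 / 8) * D by ring, Real.exp_add] at h
  obtain ⟨k, rfl⟩ := Nat.exists_eq_add_of_le' hD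
  calc (N : ℝ) ^ 2 * (3 / 4) ^ (k + 1 - 1) = 4 / 3 * N ^ 2 * (3 / 4) ^ (k + 1) := by
        rw [Nat.add_sub_cancel, pow_succ]; ring
    _ ≤ 4 / 3 * N ^ 2 * (Real.exp (-(1 / 8) * ↑(k + 1)) * Real.exp (-(1 / 8) * ↑(k + 1))) := by
        gcongr
    _ = 4 / 3 * (N * Real.exp (-(1 / 8) * ↑(k + 1))) ^ 2 := by ring

/-- Theorem 4 (GWW fails on the comb tree): there are absolute constants `C, c > 0`,
independent of `N` and `D`, such that the comb-tree chain satisfies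
`Pr[η_D < N] ≤ C·(N·e^{-cD} + e^{-cN})`; hence with `N` walkers Go-with-the-Winners
reaches the bottom-right vertex of the depth-`D` comb tree with at most this probability. -/
theorem gww_comb_failure :
    ∃ C > (0 : ℝ), ∃ c > (0 : ℝ), ∀ N D : ℕ, 1 ≤ N → 1 ≤ D →
      ∑ m ∈ Finset.range N, combDist N (D - 1) m
        ≤ C * ((N : ℝ) * Real.exp (-c * D) + Real.exp (-c * N)) := by
  refine ⟨2, two_pos, 1 / 8, by norm_num, fun N D hN hD => ?_⟩
  set x := (N : ℝ) * Real.exp (-(1 / 8) * D)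
  have hzero : (1 / 2 : ℝ) ^ N ≤ Real.exp (-(1 / 8) * N) :=
    pow_le_exp_neg_mul (by norm_num) (by linarith [Real.add_one_le_exp (-(1 / 8))]) N
  have hdecay := sq_mul_pow_le_sq_exp N hD
  have hsmall := sum_range_combDist_le hN (D - 1)
  have hone := sum_range_combDist_le_one N (D - 1)
  have hx : 0 ≤ x := by positivity
  rcases le_total x 1 with hx₁ | hx₁ <;> nlinarith [Real.exp_pos (-(1 / 8) * N)]
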